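/- The Bessel operators with parameter λ = 2 − m commute with each other: B(x_i)B(x_j) = B(x_j)B(x_i) as operators on polynomials in m commuting variables, where B(x_i) = (m − 2 + 2E)∂_i − x_i Δ. -/

import Mathlib

open MvPolynomial

noncomputable section

/-- The lowered partial derivative `∂_j = ∑_i β_{ji} ∂^i`. -/
def dlow (m : ℕ) (g : Matrix (Fin m) (Fin m) ℂ) (j : Fin m)
    (p : MvPolynomial (Fin m) ℂ) : MvPolynomial (Fin m) ℂ :=
  ∑ i, g j i • pderiv i p

/-- The Euler operator `E = ∑_{i,j} β^{ij} x_i ∂_j`. -/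
def Eop (m : ℕ) (g : Matrix (Fin m) (Fin m) ℂ)
    (p : MvPolynomial (Fin m) ℂ) : MvPolynomial (Fin m) ℂ :=
  ∑ i, ∑ j, (g⁻¹ i j) • (X i * dlow m g j p)

/-- The Laplacian `Δ = ∑_{i,j} β^{ij} ∂_i ∂_j`. -/
def Lap (m : ℕ) (g : Matrix (Fin m) (Fin m) ℂ)
    (p : MvPolynomial (Fin m) ℂ) : MvPolynomial (Fin m) ℂ :=
  ∑ i, ∑ j, (g⁻¹ i j) • dlow m g i (dlow m g j p)

/-- The squared radial coordinate `R² = ∑_{i,j} β^{ij} x_i x_j`. -/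
def R2 (m : ℕ) (g : Matrix (Fin m) (Fin m) ℂ) : MvPolynomial (Fin m) ℂ :=
  ∑ i, ∑ j, (g⁻¹ i j) • (X i * X j)

/-- The Bessel operator `B(x_i) = (m − 2 + 2E)∂_i − x_i Δ` (parameter `λ = 2 − m`). -/
def Bop (m : ℕ) (g : Matrix (Fin m) (Fin m) ℂ) (i : Fin m)
    (p : MvPolynomial (Fin m) ℂ) : MvPolynomial (Fin m) ℂ :=
  ((m : ℂ) - 2) • dlow m g i p + (2 : ℂ) • Eop m g (dlow m g i p) - X i * Lap m g p

/-!
The proof is pure commutator algebra in the ring of linear operators on polynomials. Writing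
`A = c + 2E` (here `c = m - 2`), `∂_i` for the lowered derivatives and `x_i` for multiplication
by `X i`, the Bessel operator is `B_i = A ∂_i - x_i Δ`, and these operators satisfy
`[∂_i, A] = 2∂_i`, `[A, x_i] = 2x_i`, `[Δ, A] = 4Δ`, `[∂_i, x_j] = β_ij`, `[Δ, x_i] = 2∂_i` and
`[Δ, ∂_i] = 0`, the penultimate one because `β` is symmetric. Moving every `x` to the left and
every `Δ` to the right turns `B_i B_j` into an expression symmetric in `i` and `j`; the constant
`c` never enters a commutator, so it may be arbitrary. Since `β⁻¹β = 1`, the Euler operator and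
the Laplacian, written with the inverse form, are `∑ x_a ∂^a` and `∑ ∂_a ∂^a`.
-/

attribute [local instance] LieRing.ofAssociativeRing

theorem Ring.mul_lie {A : Type*} [Ring A] (x y z : A) :
    ⁅x * y, z⁆ = x * ⁅y, z⁆ + ⁅x, z⁆ * y := by
  simp only [Ring.lie_def]
  noncomm_ring

section SmulOne

variable {R A : Type*} [CommRing R] [Ring A] [Algebra R A]

theorem lie_smul_one_add (c : R) (x y : A) : ⁅x, c • 1 + y⁆ = ⁅x, y⁆ := by
  simp only [Ring.lie_def, mul_add, add_mul, mul_smul_comm, smul_mul_assoc, mul_one, one_mul]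
  abel

theorem smul_one_add_lie (c : R) (x y : A) : ⁅c • 1 + y, x⁆ = ⁅y, x⁆ := by
  simp only [Ring.lie_def, mul_add, add_mul, mul_smul_comm, smul_mul_assoc, mul_one, one_mul]
  abel

end SmulOne

section BesselRelations

variable {A : Type*} [Ring A] {a l c d₁ d₂ x₁ x₂ : A}

theorem bessel_mul_bessel_eq_of_lie
    (hda : ⁅d₁, a⁆ = 2 • d₁) (hax : ⁅a, x₂⁆ = 2 • x₂) (hla : ⁅l, a⁆ = 4 • l)
    (hdx : ⁅d₁, x₂⁆ = c) (hlx : ⁅l, x₂⁆ = 2 • d₂) (hld : ⁅l, d₂⁆ = 0) :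
    (a * d₁ - x₁ * l) * (a * d₂ - x₂ * l) =
      a * a * (d₁ * d₂) + 2 • (a * (d₁ * d₂)) - x₂ * a * (d₁ * l) - x₁ * a * (d₂ * l)
        - 2 • (x₂ * (d₁ * l)) - 2 • (x₁ * (d₂ * l)) - a * c * l + x₁ * x₂ * (l * l) := by
  rw [Ring.lie_def, sub_eq_iff_eq_add'] at hda hax hla hdx hlx hld
  calc _ = a * (d₁ * a) * d₂ - a * (d₁ * x₂) * l - x₁ * (l * a) * d₂ + x₁ * (l * x₂) * l := by
        noncomm_ring
    _ = a * a * (d₁ * d₂) + 2 • (a * (d₁ * d₂)) - (a * x₂) * (d₁ * l) - a * c * l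
          - x₁ * a * (l * d₂) - 4 • (x₁ * (l * d₂)) + x₁ * x₂ * (l * l)
          + 2 • (x₁ * (d₂ * l)) := by
        rw [hda, hdx, hla, hlx]
        noncomm_ring
    _ = _ := by
        rw [hax, hld]
        noncomm_ring

theorem commute_bessel_of_lie (hd : ⁅d₁, d₂⁆ = 0) (hx : ⁅x₁, x₂⁆ = 0)
    (hda₁ : ⁅d₁, a⁆ = 2 • d₁) (hda₂ : ⁅d₂, a⁆ = 2 • d₂)
    (hax₁ : ⁅a, x₁⁆ = 2 • x₁) (hax₂ : ⁅a, x₂⁆ = 2 • x₂) (hla : ⁅l, a⁆ = 4 • l)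
    (hdx₁₂ : ⁅d₁, x₂⁆ = c) (hdx₂₁ : ⁅d₂, x₁⁆ = c)
    (hlx₁ : ⁅l, x₁⁆ = 2 • d₁) (hlx₂ : ⁅l, x₂⁆ = 2 • d₂)
    (hld₁ : ⁅l, d₁⁆ = 0) (hld₂ : ⁅l, d₂⁆ = 0) :
    Commute (a * d₁ - x₁ * l) (a * d₂ - x₂ * l) := by
  rw [Ring.lie_def, sub_eq_zero] at hd hx
  rw [Commute, SemiconjBy, bessel_mul_bessel_eq_of_lie hda₁ hax₂ hla hdx₁₂ hlx₂ hld₂,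
    bessel_mul_bessel_eq_of_lie hda₂ hax₁ hla hdx₂₁ hlx₁ hld₁, hd, hx]
  abel

end BesselRelations

section DerivationOperators

open LinearMap (mulLeft)

variable {R A : Type*} [CommRing R] [CommRing A] [Algebra R A]

theorem Derivation.finset_sum_apply {ι : Type*} (s : Finset ι) (D : ι → Derivation R A A)
    (a : A) : (∑ i ∈ s, D i) a = ∑ i ∈ s, D i a := by
  rw [← Derivation.coeFnAddMonoidHom_apply, map_sum, Finset.sum_apply]
  rfl

theorem Derivation.lie_mulLeft (D : Derivation R A A) (q : A) :
    ⁅(D : Module.End R A), mulLeft R q⁆ = mulLeft R (D q) := by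
  refine LinearMap.ext fun p => ?_
  simp only [Ring.lie_def, LinearMap.sub_apply, Module.End.mul_apply, LinearMap.mulLeft_apply,
    Derivation.coeFn_coe, Derivation.leibniz, smul_eq_mul]
  ring

theorem lie_mulLeft_mulLeft (p q : A) : ⁅mulLeft R p, mulLeft R q⁆ = 0 :=
  commute_iff_lie_eq.mp <| LinearMap.ext fun r => mul_left_comm p q r

end DerivationOperators

namespace MvPolynomial

open LinearMap (mulLeft)

variable {σ R : Type*} [CommRing R]

local notation "Op" => Module.End R (MvPolynomial σ R)

def HasConstCoeffs (D : Derivation R (MvPolynomial σ R) (MvPolynomial σ R)) : Prop :=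
  ∀ b, ∃ r, D (X b) = C r

theorem hasConstCoeffs_pderiv (a : σ) :
    HasConstCoeffs (pderiv a : Derivation R (MvPolynomial σ R) _) := by
  classical
  intro b
  by_cases h : a = b
  · exact ⟨1, by simp [h]⟩
  · exact ⟨0, by simp [pderiv_X_of_ne (Ne.symm h)]⟩

theorem mulLeft_C (r : R) : mulLeft R (C r : MvPolynomial σ R) = r • 1 :=
  LinearMap.ext fun _ => C_mul'

theorem HasConstCoeffs.lie_eq_zero {D D' : Derivation R (MvPolynomial σ R) (MvPolynomial σ R)}
    (hD : HasConstCoeffs D) (hD' : HasConstCoeffs D') : ⁅(D : Op), (D' : Op)⁆ = 0 := by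
  rw [← Derivation.commutator_coe_linear_map, ← Derivation.coe_zero_linearMap]
  refine congrArg _ (derivation_ext fun b => ?_)
  obtain ⟨r, hr⟩ := hD b
  obtain ⟨r', hr'⟩ := hD' b
  simp [Derivation.commutator_apply, hr, hr', derivation_C]

theorem HasConstCoeffs.lie_mul_eq_zero
    {D D' D'' : Derivation R (MvPolynomial σ R) (MvPolynomial σ R)}
    (hD : HasConstCoeffs D) (hD' : HasConstCoeffs D') (hD'' : HasConstCoeffs D'') :
    ⁅(D : Op) * D', (D'' : Op)⁆ = 0 := by
  rw [Ring.mul_lie, hD.lie_eq_zero hD'', hD'.lie_eq_zero hD'', mul_zero, zero_mul, add_zero]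

variable [Fintype σ]

variable (σ R) in
def eulerDerivation : Derivation R (MvPolynomial σ R) (MvPolynomial σ R) :=
  ∑ a, (X a : MvPolynomial σ R) • pderiv a

variable (σ) in
def eulerShift (c : R) : Module.End R (MvPolynomial σ R) :=
  c • 1 + 2 • (eulerDerivation σ R : Op)

theorem eulerDerivation_X (b : σ) : eulerDerivation σ R (X b) = X b := by
  classical
  simp [eulerDerivation, Derivation.finset_sum_apply, pderiv_X, Pi.single_apply]

theorem eulerShift_lie_mulLeft_X (c : R) (k : σ) :
    ⁅eulerShift σ c, mulLeft R (X k : MvPolynomial σ R)⁆ = 2 • mulLeft R (X k) := by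
  rw [eulerShift, smul_one_add_lie, nsmul_lie, Derivation.lie_mulLeft, eulerDerivation_X]

namespace HasConstCoeffs

variable {D D' : Derivation R (MvPolynomial σ R) (MvPolynomial σ R)}

theorem lie_eulerDerivation (hD : HasConstCoeffs D) :
    ⁅(D : Op), (eulerDerivation σ R : Op)⁆ = D := by
  rw [← Derivation.commutator_coe_linear_map]
  refine congrArg _ (derivation_ext fun b => ?_)
  obtain ⟨r, hr⟩ := hD b
  simp [Derivation.commutator_apply, eulerDerivation_X, hr, derivation_C]

theorem lie_eulerShift (hD : HasConstCoeffs D) (c : R) :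
    ⁅(D : Op), eulerShift σ c⁆ = 2 • (D : Op) := by
  rw [eulerShift, lie_smul_one_add, lie_nsmul, hD.lie_eulerDerivation]

theorem lie_mul_eulerShift (hD : HasConstCoeffs D) (hD' : HasConstCoeffs D') (c : R) :
    ⁅(D : Op) * D', eulerShift σ c⁆ = 4 • ((D : Op) * D') := by
  rw [Ring.mul_lie, hD.lie_eulerShift, hD'.lie_eulerShift, mul_smul_comm, smul_mul_assoc,
    ← add_smul]

end HasConstCoeffs

def lowerPDeriv (g : Matrix σ σ R) (i : σ) : Derivation R (MvPolynomial σ R) (MvPolynomial σ R) :=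
  ∑ a, g i a • pderiv a

def laplacian (g : Matrix σ σ R) : Module.End R (MvPolynomial σ R) :=
  ∑ a, (lowerPDeriv g a : Op) * (pderiv (R := R) a : Op)

def besselOp (c : R) (g : Matrix σ σ R) (i : σ) : Module.End R (MvPolynomial σ R) :=
  eulerShift σ c * (lowerPDeriv g i : Op) - mulLeft R (X i) * laplacian g

theorem lowerPDeriv_X (g : Matrix σ σ R) (i b : σ) : lowerPDeriv g i (X b) = C (g i b) := by
  classical
  simp [lowerPDeriv, Derivation.finset_sum_apply, pderiv_X, Pi.single_apply, C_eq_smul_one]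

theorem coe_lowerPDeriv (g : Matrix σ σ R) (i : σ) :
    (lowerPDeriv g i : Op) = ∑ a, g i a • (pderiv (R := R) a : Op) :=
  LinearMap.ext fun p => by
    simp [lowerPDeriv, Derivation.finset_sum_apply, LinearMap.sum_apply]

theorem hasConstCoeffs_lowerPDeriv (g : Matrix σ σ R) (i : σ) :
    HasConstCoeffs (lowerPDeriv g i) :=
  fun b => ⟨g i b, lowerPDeriv_X g i b⟩

theorem lie_lowerPDeriv_mulLeft_X (g : Matrix σ σ R) (i j : σ) :
    ⁅(lowerPDeriv g i : Op), mulLeft R (X j : MvPolynomial σ R)⁆ = g i j • 1 := by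
  rw [Derivation.lie_mulLeft, lowerPDeriv_X, mulLeft_C]

theorem laplacian_lie_eulerShift (g : Matrix σ σ R) (c : R) :
    ⁅laplacian g, eulerShift σ c⁆ = 4 • laplacian g := by
  rw [laplacian, sum_lie, Finset.smul_sum]
  exact Finset.sum_congr rfl fun a _ =>
    (hasConstCoeffs_lowerPDeriv g a).lie_mul_eulerShift (hasConstCoeffs_pderiv a) c

theorem laplacian_lie_lowerPDeriv (g : Matrix σ σ R) (k : σ) :
    ⁅laplacian g, (lowerPDeriv g k : Op)⁆ = 0 := by
  rw [laplacian, sum_lie]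
  exact Finset.sum_eq_zero fun a _ => (hasConstCoeffs_lowerPDeriv g a).lie_mul_eq_zero
    (hasConstCoeffs_pderiv a) (hasConstCoeffs_lowerPDeriv g k)

theorem laplacian_lie_mulLeft_X {g : Matrix σ σ R} (hg : g.IsSymm) (k : σ) :
    ⁅laplacian g, mulLeft R (X k : MvPolynomial σ R)⁆ = 2 • (lowerPDeriv g k : Op) := by
  classical
  rw [laplacian, sum_lie]
  simp only [Ring.mul_lie, Derivation.lie_mulLeft, lowerPDeriv_X, mulLeft_C, pderiv_X,
    Finset.sum_add_distrib, two_nsmul]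
  congr 1
  · rw [Finset.sum_eq_single k (fun a _ hak => by simp [Ne.symm hak]) (by simp)]
    simp only [Pi.single_eq_same, LinearMap.mulLeft_one]
    exact mul_one _
  · simp only [coe_lowerPDeriv, smul_mul_assoc, one_mul, hg.apply]

theorem commute_besselOp {g : Matrix σ σ R} (hg : g.IsSymm) (c : R) (i j : σ) :
    Commute (besselOp c g i) (besselOp c g j) :=
  commute_bessel_of_lie
    ((hasConstCoeffs_lowerPDeriv g i).lie_eq_zero (hasConstCoeffs_lowerPDeriv g j))
    (lie_mulLeft_mulLeft _ _)
    ((hasConstCoeffs_lowerPDeriv g i).lie_eulerShift c)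
    ((hasConstCoeffs_lowerPDeriv g j).lie_eulerShift c)
    (eulerShift_lie_mulLeft_X c i) (eulerShift_lie_mulLeft_X c j)
    (laplacian_lie_eulerShift g c)
    (lie_lowerPDeriv_mulLeft_X g i j) (by rw [lie_lowerPDeriv_mulLeft_X, hg.apply])
    (laplacian_lie_mulLeft_X hg i) (laplacian_lie_mulLeft_X hg j)
    (laplacian_lie_lowerPDeriv g i) (laplacian_lie_lowerPDeriv g j)

theorem sum_inv_smul_lowerPDeriv [DecidableEq σ] {g : Matrix σ σ R} (hd : IsUnit g.det)
    (i : σ) : ∑ j, g⁻¹ i j • lowerPDeriv g j = pderiv i :=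
  derivation_ext fun b => by
    have hinv := congrFun (congrFun (Matrix.nonsing_inv_mul g hd) i) b
    simp only [Matrix.mul_apply, Matrix.one_apply] at hinv
    simp only [Derivation.finset_sum_apply, Derivation.smul_apply, lowerPDeriv_X, smul_eq_C_mul,
      ← C_mul, ← map_sum, hinv, pderiv_X, Pi.single_apply, apply_ite C, C_1, C_0, eq_comm]

theorem sum_inv_smul_lowerPDeriv_apply [DecidableEq σ] {g : Matrix σ σ R} (hd : IsUnit g.det)
    (i : σ) (p : MvPolynomial σ R) : ∑ j, g⁻¹ i j • lowerPDeriv g j p = pderiv i p := by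
  rw [← sum_inv_smul_lowerPDeriv hd i, Derivation.finset_sum_apply]
  rfl

end MvPolynomial

theorem dlow_eq_lowerPDeriv (m : ℕ) (g : Matrix (Fin m) (Fin m) ℂ) (i : Fin m)
    (p : MvPolynomial (Fin m) ℂ) : dlow m g i p = lowerPDeriv g i p := by
  simp [dlow, lowerPDeriv, Derivation.finset_sum_apply]

theorem Eop_eq_eulerDerivation {m : ℕ} {g : Matrix (Fin m) (Fin m) ℂ} (hd : IsUnit g.det)
    (p : MvPolynomial (Fin m) ℂ) : Eop m g p = eulerDerivation (Fin m) ℂ p := by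
  simp only [Eop, eulerDerivation, Derivation.finset_sum_apply, Derivation.smul_apply,
    smul_eq_mul, dlow_eq_lowerPDeriv]
  refine Finset.sum_congr rfl fun i _ => ?_
  simp only [← sum_inv_smul_lowerPDeriv_apply hd i, Finset.mul_sum, mul_smul_comm]

theorem Lap_eq_laplacian {m : ℕ} {g : Matrix (Fin m) (Fin m) ℂ} (hd : IsUnit g.det)
    (p : MvPolynomial (Fin m) ℂ) : Lap m g p = laplacian g p := by
  simp only [Lap, laplacian, LinearMap.sum_apply, Module.End.mul_apply, Derivation.coeFn_coe,
    dlow_eq_lowerPDeriv]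
  refine Finset.sum_congr rfl fun i _ => ?_
  simp only [← sum_inv_smul_lowerPDeriv_apply hd i, map_sum, Derivation.map_smul]

theorem Bop_eq_besselOp {m : ℕ} {g : Matrix (Fin m) (Fin m) ℂ} (hd : IsUnit g.det) (i : Fin m)
    (p : MvPolynomial (Fin m) ℂ) : Bop m g i p = besselOp ((m : ℂ) - 2) g i p := by
  simp [Bop, besselOp, eulerShift, dlow_eq_lowerPDeriv, Eop_eq_eulerDerivation hd,
    Lap_eq_laplacian hd, two_smul]

theorem stmt5 (m : ℕ) (g : Matrix (Fin m) (Fin m) ℂ) (hg : g.IsSymm)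
    (hd : IsUnit g.det) (i j : Fin m) (p : MvPolynomial (Fin m) ℂ) :
    Bop m g i (Bop m g j p) = Bop m g j (Bop m g i p) := by
  simp only [Bop_eq_besselOp hd, ← Module.End.mul_apply, (commute_besselOp hg _ i j).eq]
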